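/- Let X = c₀η₀ + c₁η₁ + c₂η₂, where c₀² + c₁² + c₂² = 1 and c₁, c₂ > 0, the random variables η₀, η₁, η₂ are independent, η₀ is strictly subgaussian with Var(η₀) = 1, and η₁, η₂ have densities q₁, q₂ satisfying q_k(x) ≤ M_k φ(x) for all x ∈ ℝ (k = 1, 2) with constants M₁, M₂. Then X has a density p satisfying p(x) ≤ M φ(x) for all x ∈ ℝ, with M = M₁ M₂ / √(2 c₁ c₂). -/

import Mathlib

open MeasureTheory ProbabilityTheory Filter Real

/-- The standard normal density on `ℝ`. -/
noncomputable def stdGauss (x : ℝ) : ℝ := (Real.sqrt (2 * Real.pi))⁻¹ * Real.exp (-x ^ 2 / 2)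

/-- `p` is a (Lebesgue) density of the random variable `X` defined on `(Ω, μ)`. -/
def HasDensityOn {Ω : Type*} [MeasurableSpace Ω] (μ : Measure Ω) (X : Ω → ℝ) (p : ℝ → ℝ) : Prop :=
  Measurable X ∧ Measurable p ∧ (∀ x, 0 ≤ p x) ∧
    Measure.map X μ = volume.withDensity (fun x => ENNReal.ofReal (p x))

/-- The Tsallis distance of infinite order `T_∞(p‖φ) = ess sup_x (p(x) − φ(x))/φ(x)`,
with values in `[0, ∞]`. -/
noncomputable def Tinf (p : ℝ → ℝ) : ENNReal :=
  essSup (fun x => ENNReal.ofReal ((p x - stdGauss x) / stdGauss x)) volume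

/-- The Rényi divergence of infinite order `D_∞(p‖φ) = ess sup_x log (p(x)/φ(x))`,
with values in `[0, ∞]`. -/
noncomputable def Dinf (p : ℝ → ℝ) : ENNReal :=
  essSup (fun x => ENNReal.ofReal (Real.log (p x / stdGauss x))) volume

/-- The normalized sum `Z_n = (X₁ + ⋯ + X_n)/√n`. -/
noncomputable def normSum {Ω : Type*} (X : ℕ → Ω → ℝ) (n : ℕ) (ω : Ω) : ℝ :=
  (∑ k ∈ Finset.range n, X k ω) / Real.sqrt n

/-! The density of `c₁η₁ + c₂η₂` is the convolution of the two rescaled densities, so the bounds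
`q_k ≤ M_k φ` dominate it pointwise by `M₁M₂` times the `N(0, s)` density, `s = c₁² + c₂²`
(complete the square in the Gaussian integral). Adding the independent `c₀η₀` convolves once more;
the pointwise inequality `-(x - c₀u)²/(2s) ≤ -x² + s x²/2 + c₀xu`, i.e. `(x - c₀u - sx)² ≥ 0`,
reduces the resulting integral to the moment generating function of `η₀` at `c₀x`, and strict
subgaussianity with `c₀² = 1 - s` turns it into exactly `exp(-x²/2)`. Finally `2c₁c₂ ≤ s`. -/

theorem MeasureTheory.Measure.withDensity_conv_eq {G : Type*} [AddGroup G] [MeasurableSpace G]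
    [MeasurableAdd₂ G] [MeasurableNeg G] {μ : Measure G} [SFinite μ] [μ.IsAddRightInvariant]
    {f : G → ENNReal} (hf : Measurable f) (ν : Measure G) [SFinite ν] :
    μ.withDensity f ∗ ν = μ.withDensity (fun x => ∫⁻ y, f (x - y) ∂ν) := by
  refine Measure.ext_of_lintegral _ fun φ hφ => ?_
  have hφ_add : Measurable fun x => ∫⁻ y, φ (x + y) ∂ν :=
    (hφ.comp measurable_add).lintegral_prod_right'
  have hf_sub : Measurable fun x => ∫⁻ y, f (x - y) ∂ν :=
    (hf.comp measurable_sub).lintegral_prod_right'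
  calc ∫⁻ z, φ z ∂(μ.withDensity f ∗ ν)
      = ∫⁻ x, ∫⁻ y, f x * φ (x + y) ∂ν ∂μ := by
        rw [lintegral_conv hφ, lintegral_withDensity_eq_lintegral_mul _ hf hφ_add]
        exact lintegral_congr fun x => (lintegral_const_mul _ (by fun_prop)).symm
    _ = ∫⁻ y, ∫⁻ x, f (x - y) * φ x ∂μ ∂ν := by
        rw [lintegral_lintegral_swap (by fun_prop)]
        refine lintegral_congr fun y => ?_
        rw [← lintegral_add_right_eq_self (fun x => f (x - y) * φ x) y]
        simp
    _ = ∫⁻ z, φ z ∂μ.withDensity (fun x => ∫⁻ y, f (x - y) ∂ν) := by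
        rw [lintegral_lintegral_swap (by fun_prop),
          lintegral_withDensity_eq_lintegral_mul _ hf_sub hφ]
        exact lintegral_congr fun x => lintegral_mul_const _ (by fun_prop)

theorem Real.map_withDensity_const_mul {c : ℝ} (hc : c ≠ 0) {f : ℝ → ENNReal} (hf : Measurable f) :
    (volume.withDensity f).map (c * ·)
      = volume.withDensity (fun x => ENNReal.ofReal |c⁻¹| * f (c⁻¹ * x)) := by
  refine Measure.ext_of_lintegral _ fun φ hφ => ?_
  have hg : Measurable fun x => f (c⁻¹ * x) * φ x := by fun_prop
  rw [lintegral_map hφ (by fun_prop), lintegral_withDensity_eq_lintegral_mul _ hf (by fun_prop),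
    lintegral_withDensity_eq_lintegral_mul _ (by fun_prop) hφ]
  calc ∫⁻ y, f y * φ (c * y)
      = ∫⁻ y, (fun x => f (c⁻¹ * x) * φ x) (c * y) := by simp [inv_mul_cancel_left₀ hc]
    _ = ∫⁻ x, f (c⁻¹ * x) * φ x ∂(volume.map (c * ·)) := (lintegral_map hg (by fun_prop)).symm
    _ = ∫⁻ x, ENNReal.ofReal |c⁻¹| * f (c⁻¹ * x) * φ x := by
        simp_rw [Real.map_volume_mul_left hc, lintegral_smul_measure, mul_assoc, smul_eq_mul]
        exact (lintegral_const_mul _ hg).symm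

theorem stdGauss_pos (x : ℝ) : 0 < stdGauss x := by
  unfold stdGauss; positivity

theorem lintegral_stdGauss_mul_stdGauss_affine {a b : ℝ} (hb : b ≠ 0) (z : ℝ) :
    ∫⁻ v, ENNReal.ofReal (stdGauss v * (|b⁻¹| * stdGauss (b⁻¹ * (z - a * v))))
      = ENNReal.ofReal ((√(2 * π * (a ^ 2 + b ^ 2)))⁻¹ * exp (-z ^ 2 / (2 * (a ^ 2 + b ^ 2)))) := by
  set s := a ^ 2 + b ^ 2 with hs
  have hs_pos : 0 < s := by positivity
  set β := s / (2 * b ^ 2) with hβ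
  have hβ_pos : 0 < β := by positivity
  set D := (2 * π)⁻¹ * |b⁻¹| * exp (-z ^ 2 / (2 * s)) with hD
  have hsquare : ∀ v, stdGauss v * (|b⁻¹| * stdGauss (b⁻¹ * (z - a * v)))
      = D * exp (-β * (v - a * z / s) ^ 2) := by
    intro v
    have hexp : -v ^ 2 / 2 + -(b⁻¹ * (z - a * v)) ^ 2 / 2
        = -z ^ 2 / (2 * s) + -β * (v - a * z / s) ^ 2 := by
      rw [hβ, hs]; field_simp; ring
    have h2π : √(2 * π) * √(2 * π) = 2 * π := Real.mul_self_sqrt (by positivity)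
    unfold stdGauss
    calc _ = |b⁻¹| * (√(2 * π) * √(2 * π))⁻¹ *
          exp (-v ^ 2 / 2 + -(b⁻¹ * (z - a * v)) ^ 2 / 2) := by rw [exp_add]; ring
      _ = _ := by rw [h2π, hexp, exp_add]; ring
  have hint : Integrable fun v => D * exp (-β * (v - a * z / s) ^ 2) :=
    ((integrable_exp_neg_mul_sq hβ_pos).comp_sub_right _).const_mul D
  have hgauss : ∫ v, exp (-β * (v - a * z / s) ^ 2) = √(π / β) := by
    rw [integral_sub_right_eq_self (fun v => exp (-β * v ^ 2)), integral_gaussian]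
  have hconst : D * √(π / β) = (√(2 * π * s))⁻¹ * exp (-z ^ 2 / (2 * s)) := by
    have : π / β = (|b| * (2 * π) / √(2 * π * s)) ^ 2 := by
      rw [div_pow, mul_pow, sq_abs, Real.sq_sqrt (by positivity), hβ]
      field_simp
    rw [this, Real.sqrt_sq (by positivity), hD, abs_inv]
    field_simp
  simp_rw [hsquare]
  rw [← ofReal_integral_eq_lintegral_ofReal hint (.of_forall fun v => by positivity),
    integral_const_mul, hgauss, hconst]

theorem lintegral_exp_neg_sq_sub_le_of_mgf_le {Ω : Type*} [MeasurableSpace Ω] {μ : Measure Ω}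
    {Y : Ω → ℝ} (hint : ∀ t, Integrable (fun ω => exp (t * Y ω)) μ)
    (hmgf : ∀ t, mgf Y μ t ≤ exp (t ^ 2 / 2)) {c s : ℝ} (hs : 0 < s) (hcs : c ^ 2 + s ≤ 1)
    (x : ℝ) :
    ∫⁻ ω, ENNReal.ofReal (exp (-(x - c * Y ω) ^ 2 / (2 * s))) ∂μ
      ≤ ENNReal.ofReal (exp (-x ^ 2 / 2)) := by
  have hpoint : ∀ u, exp (-(x - c * u) ^ 2 / (2 * s))
      ≤ exp (-x ^ 2 + s * x ^ 2 / 2) * exp (x * c * u) := by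
    intro u
    rw [← exp_add, exp_le_exp, div_le_iff₀ (by positivity)]
    nlinarith [sq_nonneg (x - c * u - s * x)]
  calc ∫⁻ ω, ENNReal.ofReal (exp (-(x - c * Y ω) ^ 2 / (2 * s))) ∂μ
      ≤ ∫⁻ ω, ENNReal.ofReal (exp (-x ^ 2 + s * x ^ 2 / 2)) *
          ENNReal.ofReal (exp (x * c * Y ω)) ∂μ := by
        refine lintegral_mono fun ω => ?_
        rw [← ENNReal.ofReal_mul (exp_pos _).le]
        exact ENNReal.ofReal_le_ofReal (hpoint _)
    _ = ENNReal.ofReal (exp (-x ^ 2 + s * x ^ 2 / 2)) * ENNReal.ofReal (mgf Y μ (x * c)) := by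
        rw [lintegral_const_mul' _ _ ENNReal.ofReal_ne_top, mgf,
          ofReal_integral_eq_lintegral_ofReal (hint _) (.of_forall fun ω => (exp_pos _).le)]
    _ ≤ ENNReal.ofReal (exp (-x ^ 2 + s * x ^ 2 / 2)) * ENNReal.ofReal (exp ((x * c) ^ 2 / 2)) := by
        gcongr; exact hmgf _
    _ ≤ ENNReal.ofReal (exp (-x ^ 2 / 2)) := by
        rw [← ENNReal.ofReal_mul (exp_pos _).le, ← exp_add]
        refine ENNReal.ofReal_le_ofReal (exp_le_exp.2 ?_)
        nlinarith [sq_nonneg x]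

namespace ProbabilityTheory.IndepFun

variable {Ω : Type*} [MeasurableSpace Ω] {μ : Measure Ω} [IsFiniteMeasure μ]

theorem map_add_eq_withDensity {G : Type*} [AddGroup G] [MeasurableSpace G] [MeasurableAdd₂ G]
    [MeasurableNeg G] {ρ : Measure G} [SFinite ρ] [ρ.IsAddRightInvariant] {Y Z : Ω → G}
    (hY : Measurable Y) (hZ : Measurable Z) (hYZ : IndepFun Y Z μ) {f : G → ENNReal}
    (hf : Measurable f) (hYf : μ.map Y = ρ.withDensity f) :
    μ.map (Y + Z) = ρ.withDensity (fun x => ∫⁻ z, f (x - z) ∂(μ.map Z)) := by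
  rw [hYZ.map_add_eq_map_conv_map hY hZ, hYf, Measure.withDensity_conv_eq hf]

theorem exists_withDensity_mul_add_mul_le {Y₁ Y₂ : Ω → ℝ} (hY₁ : Measurable Y₁)
    (hY₂ : Measurable Y₂) (hind : IndepFun Y₁ Y₂ μ) {q₁ q₂ : ℝ → ℝ} (hq₁ : Measurable q₁)
    (hq₂ : Measurable q₂)
    (hlaw₁ : μ.map Y₁ = volume.withDensity (fun x => ENNReal.ofReal (q₁ x)))
    (hlaw₂ : μ.map Y₂ = volume.withDensity (fun x => ENNReal.ofReal (q₂ x)))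
    {M₁ M₂ : ℝ} (hM₁ : ∀ x, q₁ x ≤ M₁ * stdGauss x) (hM₂ : ∀ x, q₂ x ≤ M₂ * stdGauss x)
    (a : ℝ) {b : ℝ} (hb : b ≠ 0) :
    ∃ H : ℝ → ENNReal, Measurable H ∧
      μ.map (fun ω => a * Y₁ ω + b * Y₂ ω) = volume.withDensity H ∧
      ∀ z, H z ≤ ENNReal.ofReal M₁ * ENNReal.ofReal M₂ *
        ENNReal.ofReal (√(2 * π * (a ^ 2 + b ^ 2)))⁻¹ *
        ENNReal.ofReal (exp (-z ^ 2 / (2 * (a ^ 2 + b ^ 2)))) := by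
  set g : ℝ → ENNReal := fun x => ENNReal.ofReal |b⁻¹| * ENNReal.ofReal (q₂ (b⁻¹ * x))
  have hg : Measurable g := by fun_prop
  have hlaw₂' : μ.map (fun ω => b * Y₂ ω) = volume.withDensity g := by
    rw [← Function.comp_def, ← Measure.map_map (measurable_const_mul b) hY₂, hlaw₂,
      Real.map_withDensity_const_mul hb (by fun_prop)]
  have hsum : (fun ω => a * Y₁ ω + b * Y₂ ω) = (fun ω => b * Y₂ ω) + (fun ω => a * Y₁ ω) := by
    ext ω; exact add_comm _ _
  refine ⟨fun z => ∫⁻ y, g (z - y) ∂μ.map (fun ω => a * Y₁ ω),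
    (hg.comp measurable_sub).lintegral_prod_right', ?_, fun z => ?_⟩
  · rw [hsum]
    exact map_add_eq_withDensity (by fun_prop) (by fun_prop)
      (hind.symm.comp (measurable_const_mul b) (measurable_const_mul a)) hg hlaw₂'
  calc ∫⁻ y, g (z - y) ∂μ.map (fun ω => a * Y₁ ω)
      = ∫⁻ v, ENNReal.ofReal (q₁ v) * g (z - a * v) := by
        rw [← Function.comp_def, ← Measure.map_map (measurable_const_mul a) hY₁, hlaw₁,
          lintegral_map (by fun_prop) (by fun_prop),
          lintegral_withDensity_eq_lintegral_mul _ (by fun_prop) (by fun_prop)]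
        rfl
    _ ≤ ∫⁻ v, ENNReal.ofReal M₁ * ENNReal.ofReal M₂ *
          ENNReal.ofReal (stdGauss v * (|b⁻¹| * stdGauss (b⁻¹ * (z - a * v)))) := by
        refine lintegral_mono fun v => ?_
        have hφ := stdGauss_pos
        calc ENNReal.ofReal (q₁ v) * g (z - a * v)
            ≤ ENNReal.ofReal (M₁ * stdGauss v) * (ENNReal.ofReal |b⁻¹| *
                ENNReal.ofReal (M₂ * stdGauss (b⁻¹ * (z - a * v)))) := by
              gcongr
              · exact hM₁ v
              · dsimp only [g]
                gcongr
                exact hM₂ _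
          _ = _ := by
              rw [ENNReal.ofReal_mul' (hφ v).le, ENNReal.ofReal_mul' (hφ _).le,
                ENNReal.ofReal_mul (hφ v).le, ENNReal.ofReal_mul (abs_nonneg _)]
              ring
    _ = _ := by
        rw [lintegral_const_mul' _ _ (by finiteness), lintegral_stdGauss_mul_stdGauss_affine hb,
          ENNReal.ofReal_mul (by positivity)]
        ring

theorem exists_withDensity_const_mul_add_le_of_mgf_le {Z W : Ω → ℝ} (hZ : Measurable Z)
    (hW : Measurable W) (hind : IndepFun Z W μ)
    (hint : ∀ t, Integrable (fun ω => exp (t * Z ω)) μ) (hmgf : ∀ t, mgf Z μ t ≤ exp (t ^ 2 / 2))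
    {H : ℝ → ENNReal} (hH : Measurable H) (hlaw : μ.map W = volume.withDensity H)
    {C : ENNReal} {s : ℝ} (hH_le : ∀ z, H z ≤ C * ENNReal.ofReal (exp (-z ^ 2 / (2 * s))))
    (hs : 0 < s) {c : ℝ} (hcs : c ^ 2 + s ≤ 1) :
    ∃ P : ℝ → ENNReal, Measurable P ∧
      μ.map (fun ω => c * Z ω + W ω) = volume.withDensity P ∧
      ∀ x, P x ≤ C * ENNReal.ofReal (exp (-x ^ 2 / 2)) := by
  have hsum : (fun ω => c * Z ω + W ω) = W + (fun ω => c * Z ω) := by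
    ext ω; exact add_comm _ _
  refine ⟨fun x => ∫⁻ u, H (x - u) ∂μ.map (fun ω => c * Z ω),
    (hH.comp measurable_sub).lintegral_prod_right', ?_, fun x => ?_⟩
  · rw [hsum]
    exact map_add_eq_withDensity hW (by fun_prop)
      (hind.symm.comp measurable_id (measurable_const_mul c)) hH hlaw
  calc ∫⁻ u, H (x - u) ∂μ.map (fun ω => c * Z ω)
      = ∫⁻ ω, H (x - c * Z ω) ∂μ := lintegral_map (by fun_prop) (by fun_prop)
    _ ≤ ∫⁻ ω, C * ENNReal.ofReal (exp (-(x - c * Z ω) ^ 2 / (2 * s))) ∂μ :=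
        lintegral_mono fun ω => hH_le _
    _ ≤ C * ENNReal.ofReal (exp (-x ^ 2 / 2)) := by
        rw [lintegral_const_mul _ (by fun_prop)]
        gcongr
        exact lintegral_exp_neg_sq_sub_le_of_mgf_le hint hmgf hs hcs x

end ProbabilityTheory.IndepFun

theorem exists_hasDensityOn_le_of_map_eq_withDensity {Ω : Type*} [MeasurableSpace Ω]
    {μ : Measure Ω} {X : Ω → ℝ} (hX : Measurable X) {P : ℝ → ENNReal} (hP : Measurable P)
    (hlaw : μ.map X = volume.withDensity P) {B : ℝ → ℝ} (hB : ∀ x, 0 ≤ B x)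
    (hPB : ∀ x, P x ≤ ENNReal.ofReal (B x)) :
    ∃ p : ℝ → ℝ, HasDensityOn μ X p ∧ ∀ x, p x ≤ B x := by
  have hP_top : ∀ x, P x ≠ ⊤ := fun x => ne_top_of_le_ne_top ENNReal.ofReal_ne_top (hPB x)
  refine ⟨fun x => (P x).toReal, ⟨hX, hP.ennreal_toReal, fun _ => ENNReal.toReal_nonneg, ?_⟩,
    fun x => ENNReal.toReal_le_of_le_ofReal (hB x) (hPB x)⟩
  simp_rw [hlaw, ENNReal.ofReal_toReal (hP_top _)]

theorem nonneg_of_le_mul_stdGauss {q : ℝ → ℝ} {M : ℝ} (hq : ∀ x, 0 ≤ q x)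
    (hM : ∀ x, q x ≤ M * stdGauss x) : 0 ≤ M :=
  nonneg_of_mul_nonneg_left ((hq 0).trans (hM 0)) (stdGauss_pos 0)

theorem ofReal_mul_inv_sqrt_mul_exp_le {M₁ M₂ r s : ℝ} (hM₁ : 0 ≤ M₁) (hM₂ : 0 ≤ M₂) (hr : 0 < r)
    (hrs : r ≤ s) (x : ℝ) :
    ENNReal.ofReal M₁ * ENNReal.ofReal M₂ * ENNReal.ofReal (√(2 * π * s))⁻¹ *
        ENNReal.ofReal (exp (-x ^ 2 / 2))
      ≤ ENNReal.ofReal (M₁ * M₂ / √r * stdGauss x) := by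
  rw [← ENNReal.ofReal_mul hM₁, ← ENNReal.ofReal_mul (by positivity),
    ← ENNReal.ofReal_mul (by positivity)]
  refine ENNReal.ofReal_le_ofReal ?_
  rw [mul_assoc, div_eq_mul_inv (M₁ * M₂), mul_assoc (M₁ * M₂)]
  refine mul_le_mul_of_nonneg_left ?_ (mul_nonneg hM₁ hM₂)
  unfold stdGauss
  rw [← mul_assoc, ← mul_inv, ← Real.sqrt_mul hr.le, mul_comm r]
  gcongr

theorem renyi_clt_stmt_16_general
    {Ω : Type*} [MeasurableSpace Ω] (μ : Measure Ω) [IsProbabilityMeasure μ]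
    (η : Fin 3 → Ω → ℝ)
    (hmeas : ∀ i, Measurable (η i))
    (hindep : iIndepFun η μ)
    (hint0 : ∀ t : ℝ, Integrable (fun ω => Real.exp (t * η 0 ω)) μ)
    (hstrict0 : ∀ t : ℝ, mgf (η 0) μ t ≤ Real.exp (t ^ 2 / 2))
    (q₁ q₂ : ℝ → ℝ) (hq₁ : HasDensityOn μ (η 1) q₁) (hq₂ : HasDensityOn μ (η 2) q₂)
    (M₁ M₂ : ℝ)
    (hM₁ : ∀ x : ℝ, q₁ x ≤ M₁ * stdGauss x) (hM₂ : ∀ x : ℝ, q₂ x ≤ M₂ * stdGauss x)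
    (c₀ c₁ c₂ : ℝ) (hc : c₀ ^ 2 + c₁ ^ 2 + c₂ ^ 2 = 1) (hc₁ : 0 < c₁) (hc₂ : 0 < c₂)
    (X : Ω → ℝ) (hX : X = fun ω => c₀ * η 0 ω + c₁ * η 1 ω + c₂ * η 2 ω) :
    ∃ p : ℝ → ℝ, HasDensityOn μ X p ∧
      ∀ x : ℝ, p x ≤ M₁ * M₂ / Real.sqrt (2 * c₁ * c₂) * stdGauss x := by
  obtain ⟨hη₁, hq₁_meas, hq₁_nonneg, hlaw₁⟩ := hq₁
  obtain ⟨hη₂, hq₂_meas, hq₂_nonneg, hlaw₂⟩ := hq₂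
  obtain ⟨H, hH, hlawH, hH_le⟩ :=
    (hindep.indepFun (show (1 : Fin 3) ≠ 2 by decide)).exists_withDensity_mul_add_mul_le
      hη₁ hη₂ hq₁_meas hq₂_meas hlaw₁ hlaw₂ hM₁ hM₂ c₁ hc₂.ne'
  have hind : IndepFun (η 0) (fun ω => c₁ * η 1 ω + c₂ * η 2 ω) μ :=
    (hindep.indepFun_prodMk hmeas 1 2 0 (by decide) (by decide)).symm.comp measurable_id
      (show Measurable fun p : ℝ × ℝ => c₁ * p.1 + c₂ * p.2 by fun_prop)
  obtain ⟨P, hP, hlawP, hP_le⟩ := hind.exists_withDensity_const_mul_add_le_of_mgf_le (hmeas 0)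
    (by fun_prop) hint0 hstrict0 hH hlawH hH_le (by positivity) (c := c₀) (by linarith)
  have hlawX : μ.map X = volume.withDensity P := by
    rw [hX, ← hlawP]
    simp_rw [add_assoc]
  have hM₁_nonneg := nonneg_of_le_mul_stdGauss hq₁_nonneg hM₁
  have hM₂_nonneg := nonneg_of_le_mul_stdGauss hq₂_nonneg hM₂
  refine exists_hasDensityOn_le_of_map_eq_withDensity (by rw [hX]; fun_prop) hP hlawX
    (fun x => by have := stdGauss_pos x; positivity) fun x => (hP_le x).trans ?_
  exact ofReal_mul_inv_sqrt_mul_exp_le hM₁_nonneg hM₂_nonneg (by positivity)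
    (by nlinarith [sq_nonneg (c₁ - c₂)]) x

/-- Lemma 11.4: if `X = c₀η₀ + c₁η₁ + c₂η₂` with `c₀² + c₁² + c₂² = 1`,
`c₁, c₂ > 0`, where `η₀, η₁, η₂` are independent, `η₀` is strictly subgaussian with variance
one, and `η₁, η₂` have densities `q₁, q₂` with `q_k ≤ M_k φ` pointwise, then `X` has a
density `p` with `p ≤ M φ` pointwise, where `M = M₁M₂/√(2c₁c₂)`. -/
theorem renyi_clt_stmt_16
    {Ω : Type*} [MeasurableSpace Ω] (μ : Measure Ω) [IsProbabilityMeasure μ]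
    (η : Fin 3 → Ω → ℝ)
    (hmeas : ∀ i, Measurable (η i))
    (hindep : iIndepFun η μ)
    (hmean0 : ∫ ω, η 0 ω ∂μ = 0) (hvar0 : variance (η 0) μ = 1)
    (hint0 : ∀ t : ℝ, Integrable (fun ω => Real.exp (t * η 0 ω)) μ)
    (hstrict0 : ∀ t : ℝ, mgf (η 0) μ t ≤ Real.exp (t ^ 2 / 2))
    (q₁ q₂ : ℝ → ℝ) (hq₁ : HasDensityOn μ (η 1) q₁) (hq₂ : HasDensityOn μ (η 2) q₂)
    (M₁ M₂ : ℝ)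
    (hM₁ : ∀ x : ℝ, q₁ x ≤ M₁ * stdGauss x) (hM₂ : ∀ x : ℝ, q₂ x ≤ M₂ * stdGauss x)
    (c₀ c₁ c₂ : ℝ) (hc : c₀ ^ 2 + c₁ ^ 2 + c₂ ^ 2 = 1) (hc₁ : 0 < c₁) (hc₂ : 0 < c₂)
    (X : Ω → ℝ) (hX : X = fun ω => c₀ * η 0 ω + c₁ * η 1 ω + c₂ * η 2 ω) :
    ∃ p : ℝ → ℝ, HasDensityOn μ X p ∧
      ∀ x : ℝ, p x ≤ M₁ * M₂ / Real.sqrt (2 * c₁ * c₂) * stdGauss x :=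
  renyi_clt_stmt_16_general μ η hmeas hindep hint0 hstrict0 q₁ q₂ hq₁ hq₂ M₁ M₂ hM₁ hM₂ c₀ c₁ c₂ hc
    hc₁ hc₂ X hX
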